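/- arXiv:2204.06866 — 2 statements merged into one kernel-verified Lean document; each statement's English description precedes it below -/
import Mathlib

section
/- For every n ∈ ℕ, the polynomials x^n/2 − 1 and x^n/2 + 1 are both irreducible elements of the ring R₀ = x·ℚ[x] + ℤ; hence R₀ contains a cofinal (in the polynomial-degree order f < g iff g − f has positive leading coefficient) set of pairs of irreducible elements differing by 2. -/
/-!
By Eisenstein at 2 and Gauss's lemma, `X ^ n ± 2` is irreducible over `ℚ`, hence so is
`x ^ n / 2 ± 1`. Irreducibility in `ℚ[X]` descends to `R0` for any element whose constant term
is `± 1`: in a factorisation inside `R0` one factor is a rational constant `c`, and `c` is an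
integer dividing the constant term `± 1`, hence a unit of `R0`. Taking `n` larger than the degree
of a given `f` makes the twins `x ^ n / 2 - 1`, `x ^ n / 2 + 1` exceed `f`.
-/

open Polynomial

noncomputable def R0 : Subring (Polynomial ℚ) :=
  Subring.comap (Polynomial.evalRingHom (0 : ℚ)) ⊥

theorem irreducible_X_pow_add_C_mul_of_prime {R : Type*} [CommRing R] [IsDomain R] {p u : R}
    (hp : Prime p) (hu : IsUnit u) {n : ℕ} (hn : n ≠ 0) :
    Irreducible (X ^ n + C (p * u) : R[X]) := by
  have hmon : (X ^ n + C (p * u) : R[X]).Monic := monic_X_pow_add_C _ hn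
  have hdeg : (X ^ n + C (p * u) : R[X]).natDegree = n := natDegree_X_pow_add_C
  have hcoeff : ∀ m < n, (X ^ n + C (p * u) : R[X]).coeff m ∈ Ideal.span {p} := by
    intro m hm
    rw [coeff_add, coeff_X_pow, if_neg hm.ne, zero_add, coeff_C]
    split_ifs
    · exact Ideal.mem_span_singleton.mpr (dvd_mul_right p u)
    · exact zero_mem _
  have hnotMem : (X ^ n + C (p * u) : R[X]).coeff 0 ∉ Ideal.span {p} ^ 2 := by
    rw [coeff_add, coeff_X_pow, if_neg (Ne.symm hn), zero_add, coeff_C_zero,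
      Ideal.span_singleton_pow, Ideal.mem_span_singleton, pow_two]
    exact fun h =>
      hp.not_isUnit (isUnit_of_dvd_unit ((mul_dvd_mul_iff_left hp.ne_zero).mp h) hu)
  have hEis : (X ^ n + C (p * u) : R[X]).IsEisensteinAt (Ideal.span {p}) :=
    hmon.isEisensteinAt_of_mem_of_notMem
      (Ideal.span_singleton_ne_top hp.not_isUnit) (fun hm => hcoeff _ (hdeg ▸ hm)) hnotMem
  exact hEis.irreducible ((Ideal.span_singleton_prime hp.ne_zero).mpr hp) hmon.isPrimitive
    (hdeg.symm ▸ Nat.pos_of_ne_zero hn)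

theorem irreducible_half_mul_X_pow_add_intCast {u : ℤ} (hu : IsUnit u) {n : ℕ} (hn : n ≠ 0) :
    Irreducible (C (1 / 2 : ℚ) * X ^ n + C (u : ℚ)) := by
  have hZ := irreducible_X_pow_add_C_mul_of_prime Int.prime_two hu hn
  have hQ : Irreducible (X ^ n + C ((2 * u : ℤ) : ℚ)) := by
    simpa only [Polynomial.map_add, Polynomial.map_pow, map_X, map_C, Int.coe_castRingHom] using
      (IsPrimitive.Int.irreducible_iff_irreducible_map_cast
      (monic_X_pow_add_C _ hn).isPrimitive).mp hZ
  have h : C (1 / 2 : ℚ) * X ^ n + C (u : ℚ) = C (1 / 2) * (X ^ n + C ((2 * u : ℤ) : ℚ)) := by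
    rw [mul_add, ← C_mul, Int.cast_mul, Int.cast_two, one_div, inv_mul_cancel_left₀ two_ne_zero]
  rw [h]
  exact (irreducible_isUnit_mul (isUnit_C.mpr (by norm_num))).mpr hQ

theorem leadingCoeff_C_mul_X_pow_add_of_degree_lt {R : Type*} [Semiring R] {a : R} (ha : a ≠ 0)
    {q : R[X]} {n : ℕ} (hq : q.degree < n) : (C a * X ^ n + q).leadingCoeff = a := by
  rw [add_comm, leadingCoeff_add_of_degree_lt (by rwa [degree_C_mul_X_pow n ha]),
    leadingCoeff_C_mul_X_pow]

namespace R0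

theorem mem_iff {p : ℚ[X]} : p ∈ R0 ↔ ∃ k : ℤ, (k : ℚ) = p.eval 0 := Subring.mem_bot

noncomputable def evalZero : R0 →+* ℤ :=
  (RingEquiv.ofLeftInverse (f := Int.castRingHom ℚ) Rat.num_intCast).symm.toRingHom.comp
    ((evalRingHom 0).restrict R0 ⊥ fun _ h => h)

@[simp]
theorem intCast_evalZero (a : R0) : (evalZero a : ℚ) = (a : ℚ[X]).eval 0 := by
  obtain ⟨k, hk⟩ := mem_iff.mp a.2
  change (((a : ℚ[X]).eval 0).num : ℚ) = _
  rw [← hk, Rat.num_intCast]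

theorem isUnit_of_isUnit_coe {a : R0} (ha : IsUnit (a : ℚ[X])) (h0 : IsUnit (evalZero a)) :
    IsUnit a := by
  obtain ⟨r, -, hr⟩ := Polynomial.isUnit_iff.mp ha
  have : a = (evalZero a : R0) := Subtype.ext <| by
    rw [SubringClass.coe_intCast, ← C_eq_intCast, intCast_evalZero, ← hr, eval_C]
  rw [this]
  exact h0.map (Int.castRingHom R0)

theorem irreducible_of_irreducible_coe {p : R0} (hp : Irreducible (p : ℚ[X]))
    (h0 : IsUnit (evalZero p)) : Irreducible p := by
  refine ⟨fun hu => hp.not_isUnit (hu.map R0.subtype), fun a b hab => ?_⟩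
  have h0' : IsUnit (evalZero a * evalZero b) := by rwa [← map_mul, ← hab]
  refine (hp.isUnit_or_isUnit (congrArg Subtype.val hab)).imp (fun ha => ?_) (fun hb => ?_)
  · exact isUnit_of_isUnit_coe ha (isUnit_of_mul_isUnit_left h0')
  · exact isUnit_of_isUnit_coe hb (isUnit_of_mul_isUnit_right h0')

theorem irreducible_of_coe_eq_half_mul_X_pow_add_intCast {p : R0} {u : ℤ} (hu : IsUnit u)
    {n : ℕ} (hn : n ≠ 0) (hp : (p : ℚ[X]) = C (1 / 2) * X ^ n + C (u : ℚ)) : Irreducible p := by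
  have h0 : evalZero p = u := Int.cast_injective (α := ℚ) <| by simp [hp, hn]
  exact irreducible_of_irreducible_coe (hp ▸ irreducible_half_mul_X_pow_add_intCast hu hn)
    (h0 ▸ hu)

theorem exists_irreducible_half_mul_X_pow_sub_one_add_one {n : ℕ} (hn : n ≠ 0) :
    ∃ (hm : C (1 / 2 : ℚ) * X ^ n - 1 ∈ R0) (hp : C (1 / 2 : ℚ) * X ^ n + 1 ∈ R0),
      Irreducible (⟨_, hm⟩ : R0) ∧ Irreducible (⟨_, hp⟩ : R0) :=
  ⟨mem_iff.mpr ⟨-1, by simp [hn]⟩, mem_iff.mpr ⟨1, by simp [hn]⟩,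
    irreducible_of_coe_eq_half_mul_X_pow_add_intCast isUnit_one.neg hn
      (by simp [sub_eq_add_neg]),
    irreducible_of_coe_eq_half_mul_X_pow_add_intCast isUnit_one hn (by simp)⟩

end R0

theorem cofinal_twin_irreducibles :
    (∀ n : ℕ, 1 ≤ n →
      ∃ (hm : C (1/2 : ℚ) * X ^ n - 1 ∈ R0) (hp : C (1/2 : ℚ) * X ^ n + 1 ∈ R0),
        Irreducible (⟨C (1/2 : ℚ) * X ^ n - 1, hm⟩ : R0) ∧
        Irreducible (⟨C (1/2 : ℚ) * X ^ n + 1, hp⟩ : R0)) ∧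
    ∀ f : R0, ∃ g h : R0, Irreducible g ∧ Irreducible h ∧
      (h : Polynomial ℚ) = (g : Polynomial ℚ) + 2 ∧
      0 < ((g : Polynomial ℚ) - (f : Polynomial ℚ)).leadingCoeff := by
  refine ⟨fun n hn => R0.exists_irreducible_half_mul_X_pow_sub_one_add_one
    (Nat.one_le_iff_ne_zero.mp hn), fun f => ?_⟩
  set N := (f : ℚ[X]).natDegree
  obtain ⟨hm, hp, hg, hh⟩ :=
    R0.exists_irreducible_half_mul_X_pow_sub_one_add_one N.add_one_ne_zero
  refine ⟨⟨_, hm⟩, ⟨_, hp⟩, hg, hh, by ring, ?_⟩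
  have hlow : (-1 - (f : ℚ[X])).degree < ↑(N + 1) :=
    degree_le_natDegree.trans_lt <| by
      exact_mod_cast Nat.lt_succ_of_le ((natDegree_sub_le _ _).trans (by simp [N]))
  rw [show C (1/2 : ℚ) * X ^ (N + 1) - 1 - (f : ℚ[X])
      = C (1/2 : ℚ) * X ^ (N + 1) + (-1 - (f : ℚ[X])) by ring,
    leadingCoeff_C_mul_X_pow_add_of_degree_lt (by norm_num) hlow]
  norm_num
end

section
/- The canonical order on ℚ[x], where f < g iff g − f has positive leading coefficient, restricts to a discrete linear order on R_τ = {f ∈ ℚ[x] : ∀ p, f(τ_p) ∈ ℤ_p}: for every f ∈ R_τ there is no element of R_τ strictly between f and f + 1. -/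
/-!
The difference `h = g - f` lies in `Rtau τ`. If `h` is nonconstant, the leading coefficients of `h`
and `1 - h` are negatives of each other. If `h` is a constant `q`, then `q ∈ ℤ_[p]` for every
prime `p`, so no prime divides the denominator of `q`: it is an integer, hence not strictly
between `0` and `1`.
-/

open Polynomial

noncomputable def Rtau (τ : (p : ℕ) → [Fact p.Prime] → ℤ_[p]) : Subring (Polynomial ℚ) :=
  ⨅ (p : ℕ) (hp : Fact p.Prime),
    Subring.comap (Polynomial.aeval ((τ p : ℤ_[p]) : ℚ_[p]) : Polynomial ℚ →ₐ[ℚ] ℚ_[p]).toRingHom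
      (PadicInt.Coe.ringHom (p := p)).range

theorem Rat.den_eq_one_of_forall_norm_padic_le_one {q : ℚ}
    (h : ∀ (p : ℕ) [Fact p.Prime], ‖(q : ℚ_[p])‖ ≤ 1) : q.den = 1 := by
  by_contra hden
  obtain ⟨p, hp, hpq⟩ := Nat.exists_prime_and_dvd hden
  have : Fact p.Prime := ⟨hp⟩
  have hnorm := (Padic.norm_rat_le_one_iff_padicValuation_le_one p).1 (h p)
  exact Rat.padicValuation_le_one_iff.1 hnorm hpq

theorem Polynomial.leadingCoeff_C_sub_of_natDegree_pos {R : Type*} [Ring R] {p : R[X]} (a : R)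
    (hp : 0 < p.natDegree) : (C a - p).leadingCoeff = -p.leadingCoeff :=
  leadingCoeff_sub_of_degree_lt' (degree_C_le.trans_lt (natDegree_pos_iff_degree_pos.1 hp))

theorem mem_Rtau_iff {τ : (p : ℕ) → [Fact p.Prime] → ℤ_[p]} {f : ℚ[X]} :
    f ∈ Rtau τ ↔ ∀ (p : ℕ) [Fact p.Prime], ‖aeval ((τ p : ℤ_[p]) : ℚ_[p]) f‖ ≤ 1 := by
  simp only [Rtau, Subring.mem_iInf, Subring.mem_comap, RingHom.mem_range]
  refine forall₂_congr fun p _ ↦ ⟨?_, fun h ↦ ⟨⟨_, h⟩, rfl⟩⟩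
  rintro ⟨z, hz⟩
  exact hz ▸ z.norm_le_one

theorem C_mem_Rtau_iff {τ : (p : ℕ) → [Fact p.Prime] → ℤ_[p]} {q : ℚ} :
    C q ∈ Rtau τ ↔ q.den = 1 := by
  refine ⟨fun hq ↦ Rat.den_eq_one_of_forall_norm_padic_le_one fun p _ ↦ ?_, fun hq ↦ ?_⟩
  · simpa using mem_Rtau_iff.1 hq p
  · rw [← Rat.coe_int_num_of_den_eq_one hq, map_intCast]
    exact intCast_mem _ _

/-- The canonical order on ℚ[x] restricted to `Rtau τ` is discrete: no element lies
strictly between `f` and `f + 1`. Here `a < b` iff `b - a` has positive leading coefficient. -/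
theorem Rtau_discretely_ordered (τ : (p : ℕ) → [Fact p.Prime] → ℤ_[p])
    (f g : Rtau τ) :
    ¬ (0 < ((g : Polynomial ℚ) - (f : Polynomial ℚ)).leadingCoeff ∧
        0 < ((f : Polynomial ℚ) + 1 - (g : Polynomial ℚ)).leadingCoeff) := by
  rintro ⟨hpos, hlt⟩
  rw [show (f : ℚ[X]) + 1 - (g : ℚ[X]) = C 1 - ((g : ℚ[X]) - (f : ℚ[X])) by rw [C_1]; ring]
    at hlt
  have hmem : (g : ℚ[X]) - (f : ℚ[X]) ∈ Rtau τ := sub_mem g.2 f.2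
  generalize (g : ℚ[X]) - (f : ℚ[X]) = h at hpos hlt hmem
  rcases Nat.eq_zero_or_pos h.natDegree with hdeg | hdeg
  · obtain ⟨q, rfl⟩ : ∃ q, h = C q := ⟨_, eq_C_of_natDegree_eq_zero hdeg⟩
    obtain ⟨n, rfl⟩ : ∃ n : ℤ, (n : ℚ) = q :=
      ⟨_, Rat.coe_int_num_of_den_eq_one (C_mem_Rtau_iff.1 hmem)⟩
    rw [leadingCoeff_C] at hpos
    rw [← C_sub, leadingCoeff_C, sub_pos] at hlt
    have : (0 : ℤ) < n := by exact_mod_cast hpos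
    have : n < 1 := by exact_mod_cast hlt
    omega
  · rw [leadingCoeff_C_sub_of_natDegree_pos 1 hdeg] at hlt
    linarith
end
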